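/- Let α ∈ [1,2] and s ≥ 0. There is a constant C = C(α,s) > 0 such that for every λ > 0 and every u ∈ E^s, the rescaled function u_λ(x,y) = λ · u(λ^{1/α} x, λ^{1/2} y) satisfies ‖u_λ‖_{E^s} ≤ C λ^{3/4 − 1/(2α)} (1 + λ^s) ‖u‖_{E^s}. -/

import Mathlib

/-!
On the Fourier side, `u ↦ u_λ` is multiplication by `λ^{1/2 - 1/α}` composed with the
anisotropic dilation `(ξ, μ) ↦ (λ^{-1/α} ξ, λ^{-1/2} μ)`. The dilation multiplies the `L²` norm
by the square root of its inverse Jacobian, `λ^{1/(2α) + 1/4}`, and it divides the symbol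
`|ξ|^α + μ²` exactly by `λ`; Peetre's inequality `⟨λ X⟩^s ≤ ⟨λ⟩^s ⟨X⟩^s ≤ 2^{s/2} (1 + λ^s) ⟨X⟩^s`
then transfers the weight from `ζ` to the dilated point.
-/

open MeasureTheory Set

noncomputable section

/-- The weight `⟨|ξ|^α + μ²⟩^s` defining the `E^s` norm on the Fourier side. -/
def wgt (α s : ℝ) (ζ : ℝ × ℝ) : ℝ := (1 + (|ζ.1| ^ α + ζ.2 ^ 2) ^ 2) ^ (s / 2)

section Dilation

variable {E F : Type*} [NormedAddCommGroup E] [NormedSpace ℝ E] [MeasurableSpace E]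
  [BorelSpace E] [FiniteDimensional ℝ E] [NormedAddCommGroup F]

theorem eLpNorm_comp_linearMap (μ : Measure E) [μ.IsAddHaarMeasure] {f : E →ₗ[ℝ] E}
    (hf : LinearMap.det f ≠ 0) (g : E → F) {p : ENNReal} (hp : p ≠ ⊤) :
    eLpNorm (g ∘ f) p μ
      = ENNReal.ofReal |(LinearMap.det f)⁻¹| ^ (1 / p).toReal * eLpNorm g p μ := by
  have hemb : MeasurableEmbedding f :=
    (f.equivOfDetNeZero hf).toContinuousLinearEquiv.toHomeomorph.measurableEmbedding
  rw [← hemb.eLpNorm_map_measure, Measure.map_linearMap_addHaar_eq_smul_addHaar μ hf,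
    eLpNorm_smul_measure_of_ne_top hp, smul_eq_mul]

theorem eLpNorm_comp_dilation (g : ℝ × ℝ → F) {a b : ℝ} (ha : 0 < a) (hb : 0 < b)
    {p : ENNReal} (hp : p ≠ ⊤) :
    eLpNorm (fun ζ : ℝ × ℝ => g (a * ζ.1, b * ζ.2)) p volume
      = ENNReal.ofReal (a * b)⁻¹ ^ (1 / p).toReal * eLpNorm g p volume := by
  set f : ℝ × ℝ →ₗ[ℝ] ℝ × ℝ := (a • LinearMap.id).prodMap (b • LinearMap.id)
  have hdet : LinearMap.det f = a * b := by
    simp [f, LinearMap.det_prodMap]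
  have := eLpNorm_comp_linearMap volume (f := f) (by rw [hdet]; positivity) g hp
  rwa [hdet, abs_of_pos (by positivity)] at this

end Dilation

theorem one_add_sq_rpow_mul_le (x y : ℝ) {t : ℝ} (ht : 0 ≤ t) :
    (1 + (x * y) ^ 2) ^ t ≤ (1 + x ^ 2) ^ t * (1 + y ^ 2) ^ t := by
  rw [← Real.mul_rpow (by positivity) (by positivity)]
  exact Real.rpow_le_rpow (by positivity) (by nlinarith [sq_nonneg x, sq_nonneg y]) ht

theorem one_add_sq_rpow_half_le {x s : ℝ} (hx : 0 ≤ x) (hs : 0 ≤ s) :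
    (1 + x ^ 2) ^ (s / 2) ≤ 2 ^ (s / 2) * (1 + x ^ s) := by
  have hM : 0 ≤ max 1 x := le_max_of_le_right hx
  calc (1 + x ^ 2) ^ (s / 2) ≤ (2 * max 1 x ^ 2) ^ (s / 2) := by
        gcongr
        nlinarith [le_max_left 1 x, le_max_right 1 x]
    _ = 2 ^ (s / 2) * max 1 x ^ s := by
        rw [Real.mul_rpow (by norm_num) (by positivity), ← Real.rpow_natCast,
          ← Real.rpow_mul hM]
        congr 2
        ring
    _ ≤ 2 ^ (s / 2) * (1 + x ^ s) := by
        gcongr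
        rcases le_total x 1 with h | h
        · simp [max_eq_left h, Real.rpow_nonneg hx]
        · simp [max_eq_right h]

theorem abs_rpow_neg_inv_mul_rpow {lam α : ℝ} (hlam : 0 < lam) (hα : α ≠ 0) (ξ : ℝ) :
    |lam ^ (-(1 / α)) * ξ| ^ α = lam⁻¹ * |ξ| ^ α := by
  rw [abs_mul, abs_of_pos (Real.rpow_pos_of_pos hlam _),
    Real.mul_rpow (Real.rpow_pos_of_pos hlam _).le (abs_nonneg _),
    ← Real.rpow_mul hlam.le, neg_mul, one_div, inv_mul_cancel₀ hα, Real.rpow_neg_one]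

theorem rpow_neg_half_mul_sq {lam : ℝ} (hlam : 0 < lam) (μ : ℝ) :
    (lam ^ (-(1:ℝ) / 2) * μ) ^ 2 = lam⁻¹ * μ ^ 2 := by
  rw [mul_pow, ← Real.rpow_natCast, ← Real.rpow_mul hlam.le]
  norm_num [Real.rpow_neg_one]

theorem wgt_nonneg (α s : ℝ) (ζ : ℝ × ℝ) : 0 ≤ wgt α s ζ := by
  unfold wgt
  positivity

theorem wgt_le_wgt_dilation {α s lam : ℝ} (hα : α ≠ 0) (hs : 0 ≤ s) (hlam : 0 < lam)
    (ζ : ℝ × ℝ) :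
    wgt α s ζ ≤ 2 ^ (s / 2) * (1 + lam ^ s) *
      wgt α s (lam ^ (-(1 / α)) * ζ.1, lam ^ (-(1:ℝ) / 2) * ζ.2) := by
  have hsymbol : |ζ.1| ^ α + ζ.2 ^ 2 = lam *
      (|lam ^ (-(1 / α)) * ζ.1| ^ α + (lam ^ (-(1:ℝ) / 2) * ζ.2) ^ 2) := by
    rw [abs_rpow_neg_inv_mul_rpow hlam hα, rpow_neg_half_mul_sq hlam]
    field_simp
  unfold wgt
  rw [hsymbol]
  calc _ ≤ _ := one_add_sq_rpow_mul_le _ _ (by positivity)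
    _ ≤ _ := by gcongr; exact one_add_sq_rpow_half_le hlam.le hs

theorem norm_wgt_mul_le_wgt_dilation {α s lam c : ℝ} (hα : α ≠ 0) (hs : 0 ≤ s)
    (hlam : 0 < lam) (hc : 0 < c) (g : ℝ × ℝ → ℂ) (ζ : ℝ × ℝ) :
    ‖((wgt α s ζ : ℝ) : ℂ) * (c : ℂ) * g (lam ^ (-(1 / α)) * ζ.1, lam ^ (-(1:ℝ) / 2) * ζ.2)‖
      ≤ 2 ^ (s / 2) * (1 + lam ^ s) * c *
        ‖((wgt α s (lam ^ (-(1 / α)) * ζ.1, lam ^ (-(1:ℝ) / 2) * ζ.2) : ℝ) : ℂ) *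
          g (lam ^ (-(1 / α)) * ζ.1, lam ^ (-(1:ℝ) / 2) * ζ.2)‖ := by
  simp only [norm_mul, Complex.norm_real, Real.norm_eq_abs,
    abs_of_nonneg (wgt_nonneg _ _ _), abs_of_pos hc]
  have := wgt_le_wgt_dilation hα hs hlam ζ
  calc _ ≤ 2 ^ (s / 2) * (1 + lam ^ s) *
        wgt α s (lam ^ (-(1 / α)) * ζ.1, lam ^ (-(1:ℝ) / 2) * ζ.2) * c *
          ‖g (lam ^ (-(1 / α)) * ζ.1, lam ^ (-(1:ℝ) / 2) * ζ.2)‖ := by gcongr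
    _ = _ := by ring

theorem rpow_mul_sqrt_jacobian_dilation {lam α : ℝ} (hlam : 0 < lam) :
    lam ^ (1 - 1 / α - 1 / 2) * ((lam ^ (-(1 / α)) * lam ^ (-(1:ℝ) / 2))⁻¹) ^ (1 / 2 : ℝ)
      = lam ^ ((3:ℝ) / 4 - 1 / (2 * α)) := by
  rw [← Real.rpow_add hlam, ← Real.rpow_neg hlam.le, ← Real.rpow_mul hlam.le,
    ← Real.rpow_add hlam]
  ring_nf

/-- `‖u_λ‖_{E^s} ≤ C λ^{3/4 - 1/(2α)} (1 + λ^s) ‖u‖_{E^s}` for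
`u_λ(x,y) = λ u(λ^{1/α} x, λ^{1/2} y)`, stated on the Fourier side with `g = û`:
the Fourier transform of `u_λ` is `λ^{1 - 1/α - 1/2} ĝ(λ^{-1/α} ξ, λ^{-1/2} μ)`. -/
theorem stmt17 (α : ℝ) (hα : α ∈ Icc (1:ℝ) 2) (s : ℝ) (hs : 0 ≤ s) :
    ∃ C > (0:ℝ), ∀ lam : ℝ, 0 < lam → ∀ g : ℝ × ℝ → ℂ,
      eLpNorm (fun ζ : ℝ × ℝ =>
          ((wgt α s ζ : ℝ) : ℂ) * ((lam ^ (1 - 1 / α - 1 / 2) : ℝ) : ℂ) *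
            g (lam ^ (-(1 / α)) * ζ.1, lam ^ (-(1:ℝ) / 2) * ζ.2)) 2 volume
        ≤ ENNReal.ofReal (C * lam ^ ((3:ℝ) / 4 - 1 / (2 * α)) * (1 + lam ^ s)) *
          eLpNorm (fun ζ : ℝ × ℝ => ((wgt α s ζ : ℝ) : ℂ) * g ζ) 2 volume := by
  have hα0 : α ≠ 0 := by linarith [hα.1]
  refine ⟨2 ^ (s / 2), by positivity, fun lam hlam g => ?_⟩
  have hc : 0 < lam ^ (1 - 1 / α - 1 / 2) := Real.rpow_pos_of_pos hlam _
  have hpointwise := norm_wgt_mul_le_wgt_dilation hα0 hs hlam hc g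
  calc _ ≤ _ := eLpNorm_le_mul_eLpNorm_of_ae_le_mul (Filter.Eventually.of_forall hpointwise) 2
    _ = _ := by
      rw [eLpNorm_comp_dilation (fun ζ => ((wgt α s ζ : ℝ) : ℂ) * g ζ)
          (Real.rpow_pos_of_pos hlam _) (Real.rpow_pos_of_pos hlam _) (by simp),
        ← mul_assoc, ENNReal.toReal_div, ENNReal.toReal_ofNat, ENNReal.toReal_one,
        ENNReal.ofReal_rpow_of_nonneg (by positivity) (by norm_num),
        ← ENNReal.ofReal_mul (by positivity)]
      congr 2
      rw [← rpow_mul_sqrt_jacobian_dilation hlam]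
      ring
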